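/- arXiv:0706.1311 — 2 statements merged into one kernel-verified Lean document; each statement's English description precedes it below -/
import Mathlib

section
/- Let k be a field, V and W two n-dimensional Z-graded k-vector spaces whose minimal nonzero graded pieces are in degree 0, and A a graded matrix algebra of rank n^2 acting nontrivially on both V and W via graded actions making them simple A-modules. Then any A-linear isomorphism α: V → W is graded, i.e., α(V_i) ⊆ W_i for all i. -/
namespace GradedSN

variable {k X : Type} [Field k] [AddCommGroup X] [Module k X]
variable (Xg : ℤ → Submodule k X)

/-- Projection onto the degree `j` part of an internal grading. -/
noncomputable def proj (h : DirectSum.IsInternal Xg) (j : ℤ) : X →ₗ[k] X :=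
  (Xg j).subtype ∘ₗ (DirectSum.component k ℤ (fun i => Xg i) j) ∘ₗ
    ((LinearEquiv.ofBijective (DirectSum.coeLinearMap Xg) h).symm :
      X →ₗ[k] DirectSum ℤ (fun i => Xg i))

theorem proj_apply (h : DirectSum.IsInternal Xg) (j : ℤ) (u : X) :
    proj Xg h j u =
      (((LinearEquiv.ofBijective (DirectSum.coeLinearMap Xg) h).symm u) j : X) := rfl

theorem proj_mem (h : DirectSum.IsInternal Xg) (j : ℤ) (u : X) :
    proj Xg h j u ∈ Xg j := by
  rw [proj_apply]; exact Submodule.coe_mem _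

theorem proj_same (h : DirectSum.IsInternal Xg) {j : ℤ} {x : X} (hx : x ∈ Xg j) :
    proj Xg h j x = x := by
  rw [proj_apply, h.ofBijective_coeLinearMap_of_mem hx]

theorem proj_ne (h : DirectSum.IsInternal Xg) {m j : ℤ} (hmj : m ≠ j) {x : X}
    (hx : x ∈ Xg m) : proj Xg h j x = 0 := by
  rw [proj_apply, h.ofBijective_coeLinearMap_of_mem_ne hmj hx, Submodule.coe_zero]

theorem proj_sum (h : DirectSum.IsInternal Xg) (T : Finset ℤ)
    (hT : ∀ j ∉ T, Xg j = ⊥) (u : X) : ∑ j ∈ T, proj Xg h j u = u := by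
  classical
  set e := LinearEquiv.ofBijective (DirectSum.coeLinearMap Xg) h with he
  set x := e.symm u with hx
  have hsupp : x.support ⊆ T := by
    intro j hj
    by_contra hjT
    have hz : (x j : X) = 0 :=
      (Submodule.eq_bot_iff _).mp (hT j hjT) _ (Submodule.coe_mem _)
    exact (DFinsupp.mem_support_iff.mp hj) (Subtype.ext hz)
  have key : ∀ j, proj Xg h j u = (x j : X) := fun j => proj_apply Xg h j u
  calc ∑ j ∈ T, proj Xg h j u = ∑ j ∈ T, (x j : X) :=
        Finset.sum_congr rfl fun j _ => key j
    _ = ∑ j ∈ x.support, (x j : X) :=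
        (Finset.sum_subset hsupp (fun j _ hj => by
          rw [DFinsupp.notMem_support_iff.mp hj, Submodule.coe_zero])).symm
    _ = DirectSum.coeLinearMap Xg (∑ i ∈ x.support, DirectSum.of (fun i => Xg i) i (x i)) := by
        rw [map_sum]
        exact Finset.sum_congr rfl fun j _ =>
          (DirectSum.coeLinearMap_of Xg j (x j)).symm
    _ = DirectSum.coeLinearMap Xg x := by rw [DirectSum.sum_support_of x]
    _ = e x := (LinearEquiv.ofBijective_apply (f := DirectSum.coeLinearMap Xg) (hf := h) x).symm
    _ = u := e.apply_symm_apply u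

theorem exists_finset (h : DirectSum.IsInternal Xg) [FiniteDimensional k X] :
    ∃ S : Finset ℤ, ∀ j ∉ S, Xg j = ⊥ := by
  classical
  set e := LinearEquiv.ofBijective (DirectSum.coeLinearMap Xg) h with he
  let b := Module.finBasis k X
  refine ⟨Finset.univ.biUnion (fun t => (e.symm (b t)).support), fun j hj => ?_⟩
  have hproj : proj Xg h j = 0 := by
    apply b.ext
    intro t
    have hmem : j ∉ (e.symm (b t)).support := fun hm =>
      hj (Finset.mem_biUnion.mpr ⟨t, Finset.mem_univ t, hm⟩)
    rw [proj_apply, DFinsupp.notMem_support_iff.mp hmem, Submodule.coe_zero,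
      LinearMap.zero_apply]
  rw [Submodule.eq_bot_iff]
  intro x hxmem
  rw [← proj_same Xg h hxmem, hproj, LinearMap.zero_apply]

/-- Every endomorphism of a finite-dimensional internally graded space decomposes
into homogeneous parts. -/
theorem exists_decomp {U : Type} [AddCommGroup U] [Module k U]
    (Ug : ℤ → Submodule k U) (h : DirectSum.IsInternal Ug) [FiniteDimensional k U]
    (a : Module.End k U) :
    ∃ (D : Finset ℤ) (c : ℤ → Module.End k U),
      (∀ d : ℤ, ∀ i : ℤ, (Ug i).map (c d) ≤ Ug (i + d)) ∧ a = ∑ d ∈ D, c d := by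
  classical
  obtain ⟨S, hS⟩ := exists_finset Ug h
  set P := proj Ug h with hP
  refine ⟨(S ×ˢ S).image (fun p => p.2 - p.1),
    fun d => ∑ i ∈ S, (P (i + d)) ∘ₗ a ∘ₗ (P i), fun d i => ?_, ?_⟩
  · rintro _ ⟨x, hx, rfl⟩
    rw [LinearMap.sum_apply]
    apply Submodule.sum_mem
    intro m _
    rw [LinearMap.comp_apply, LinearMap.comp_apply]
    by_cases hmi : m = i
    · subst hmi
      exact proj_mem Ug h (m + d) _
    · rw [proj_ne Ug h (Ne.symm hmi) hx, map_zero, map_zero]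
      exact Submodule.zero_mem _
  · apply LinearMap.ext
    intro u
    set D := (S ×ˢ S).image (fun p : ℤ × ℤ => p.2 - p.1) with hD
    have hLHS : (∑ d ∈ D, ∑ i ∈ S, (P (i + d)) ∘ₗ a ∘ₗ (P i)) u
        = ∑ i ∈ S, ∑ d ∈ D, P (i + d) (a (P i u)) := by
      simp only [LinearMap.sum_apply, LinearMap.comp_apply]
      rw [Finset.sum_comm]
    rw [hLHS]
    have step1 : ∀ i ∈ S, ∑ d ∈ D, P (i + d) (a (P i u)) = a (P i u) := by
      intro i hi
      set y := a (P i u)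
      have hinj : ∀ x ∈ D, ∀ z ∈ D, i + x = i + z → x = z := fun x _ z _ hxz => by omega
      have h2 : ∑ j ∈ D.image (fun d => i + d), P j y = y := by
        apply proj_sum Ug h
        intro j hj
        by_contra hbot
        have hjS : j ∈ S := by
          by_contra hjS; exact hbot (hS j hjS)
        apply hj
        apply Finset.mem_image.mpr
        exact ⟨j - i, Finset.mem_image.mpr
          ⟨(i, j), Finset.mem_product.mpr ⟨hi, hjS⟩, rfl⟩, by omega⟩
      rw [Finset.sum_image hinj] at h2
      exact h2
    rw [Finset.sum_congr rfl step1, ← map_sum, proj_sum Ug h S hS]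

end GradedSN

open GradedSN


/-- Graded Skolem–Noether over a field: any `A`-linear isomorphism
between two simple graded modules over a graded matrix algebra (with lowest
graded pieces in degree 0) is graded. -/
theorem stmt_0
    (k : Type) [Field k] (n : ℕ) (hn : 0 < n)
    (U V W : Type) [AddCommGroup U] [Module k U]
    [AddCommGroup V] [Module k V] [AddCommGroup W] [Module k W]
    (Ug : ℤ → Submodule k U) (Vg : ℤ → Submodule k V) (Wg : ℤ → Submodule k W)
    (hUint : DirectSum.IsInternal Ug)
    (hVint : DirectSum.IsInternal Vg)
    (hWint : DirectSum.IsInternal Wg)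
    (hUdim : Module.finrank k U = n)
    (hVdim : Module.finrank k V = n)
    (hWdim : Module.finrank k W = n)
    -- the minimal nonzero graded piece of each space is in degree 0
    (hU0 : Ug 0 ≠ ⊥) (hUneg : ∀ i : ℤ, i < 0 → Ug i = ⊥)
    (hV0 : Vg 0 ≠ ⊥) (hVneg : ∀ i : ℤ, i < 0 → Vg i = ⊥)
    (hW0 : Wg 0 ≠ ⊥) (hWneg : ∀ i : ℤ, i < 0 → Wg i = ⊥)
    -- A = End(U), the graded matrix algebra of rank n², acting on V and W
    (ρV : Module.End k U →ₐ[k] Module.End k V)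
    (ρW : Module.End k U →ₐ[k] Module.End k W)
    -- the actions are graded: A_d · V_i ⊆ V_{i+d}, where
    -- A_d = {f : End(U) | f(U_i) ⊆ U_{i+d}}
    (hρVgr : ∀ (d : ℤ) (f : Module.End k U),
      (∀ i : ℤ, (Ug i).map f ≤ Ug (i + d)) →
      ∀ i : ℤ, (Vg i).map (ρV f) ≤ Vg (i + d))
    (hρWgr : ∀ (d : ℤ) (f : Module.End k U),
      (∀ i : ℤ, (Ug i).map f ≤ Ug (i + d)) →
      ∀ i : ℤ, (Wg i).map (ρW f) ≤ Wg (i + d))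
    -- the actions are nontrivial
    (hVnontriv : ∃ (f : Module.End k U) (v : V), ρV f v ≠ 0)
    (hWnontriv : ∃ (f : Module.End k U) (w : W), ρW f w ≠ 0)
    -- V and W are simple A-modules
    (hVsimple : ∀ p : Submodule k V, (∀ f : Module.End k U, p.map (ρV f) ≤ p) →
      p = ⊥ ∨ p = ⊤)
    (hWsimple : ∀ p : Submodule k W, (∀ f : Module.End k U, p.map (ρW f) ≤ p) →
      p = ⊥ ∨ p = ⊤)
    -- α is an A-linear isomorphism
    (α : V ≃ₗ[k] W)
    (hα : ∀ (f : Module.End k U) (v : V), α (ρV f v) = ρW f (α v)) :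
    ∀ i : ℤ, (Vg i).map (α : V →ₗ[k] W) ≤ Wg i := by
  classical
  have instU : FiniteDimensional k U :=
    Module.finite_of_finrank_pos (by rw [hUdim]; exact hn)
  have instW : FiniteDimensional k W :=
    Module.finite_of_finrank_pos (by rw [hWdim]; exact hn)
  obtain ⟨SW, hSW⟩ := exists_finset Wg hWint
  -- degree predicate on endomorphisms of U
  set Deg : ℤ → Module.End k U → Prop :=
    fun d f => ∀ m : ℤ, (Ug m).map f ≤ Ug (m + d) with hDeg
  have hDeg_apply : ∀ {d f}, Deg d f → ∀ {m : ℤ} {x : U}, x ∈ Ug m → f x ∈ Ug (m + d) :=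
    fun hf _ _ hx => hf _ (Submodule.mem_map_of_mem hx)
  -- Lemma B : α maps the degree-0 part of V into the degree-0 part of W
  have lemB : ∀ v0 ∈ Vg 0, α v0 ∈ Wg 0 := by
    intro v0 hv0
    set w : W := α v0 with hw
    have negkill : ∀ (d : ℤ), d < 0 → ∀ f, Deg d f → ρW f w = 0 := by
      intro d hd f hf
      have h1 : ρV f v0 ∈ Vg (0 + d) := hρVgr d f hf 0 (Submodule.mem_map_of_mem hv0)
      rw [zero_add, hVneg d hd, Submodule.mem_bot] at h1
      calc ρW f w = α (ρV f v0) := (hα f v0).symm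
        _ = 0 := by rw [h1, map_zero]
    have hwsum : w = ∑ j ∈ SW, proj Wg hWint j w := (proj_sum Wg hWint SW hSW w).symm
    rw [hwsum]
    apply Submodule.sum_mem
    intro j hjSW
    rcases lt_trichotomy j 0 with hj | hj | hj
    · have : proj Wg hWint j w ∈ Wg j := proj_mem Wg hWint j w
      rw [hWneg j hj, Submodule.mem_bot] at this
      rw [this]; exact Submodule.zero_mem _
    · rw [hj]; exact proj_mem Wg hWint 0 w
    · -- positive degree component must vanish
      suffices hz : proj Wg hWint j w = 0 by rw [hz]; exact Submodule.zero_mem _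
      by_contra hne
      set wj := proj Wg hWint j w with hwj
      have hwjmem : wj ∈ Wg j := proj_mem Wg hWint j w
      -- sub-claim 1: every endomorphism of degree -j kills wj
      have sub1 : ∀ f, Deg (-j) f → ρW f wj = 0 := by
        intro f hf
        have h1 : ρW f w = 0 := negkill (-j) (by omega) f hf
        have h2 : (0 : W) = ∑ m ∈ SW, proj Wg hWint 0 (ρW f (proj Wg hWint m w)) := by
          calc (0 : W) = proj Wg hWint 0 (ρW f w) := by rw [h1, map_zero]
            _ = proj Wg hWint 0 (∑ m ∈ SW, ρW f (proj Wg hWint m w)) := by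
                rw [← map_sum, ← hwsum]
            _ = _ := by rw [map_sum]
        have h3 : ∑ m ∈ SW, proj Wg hWint 0 (ρW f (proj Wg hWint m w)) = ρW f wj := by
          rw [Finset.sum_eq_single_of_mem j hjSW]
          · have hmem : ρW f wj ∈ Wg 0 := by
              have := hρWgr (-j) f hf j (Submodule.mem_map_of_mem hwjmem)
              rwa [add_neg_cancel] at this
            exact proj_same Wg hWint hmem
          · intro m _ hmne
            have hmem : ρW f (proj Wg hWint m w) ∈ Wg (m + -j) :=
              hρWgr (-j) f hf m (Submodule.mem_map_of_mem (proj_mem Wg hWint m w))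
            exact proj_ne Wg hWint (by omega) hmem
        rw [h3] at h2
        exact h2.symm
      -- sub-claim 2: the A-orbit of wj is everything
      set L : Module.End k U →ₗ[k] W :=
        { toFun := fun a => ρW a wj
          map_add' := fun a b => by
            show ρW (a + b) wj = ρW a wj + ρW b wj
            rw [map_add]; rfl
          map_smul' := fun c a => by
            show ρW (c • a) wj = c • (ρW a wj)
            rw [map_smul]; rfl } with hL
      have hstable : ∀ b : Module.End k U,
          (LinearMap.range L).map (ρW b) ≤ LinearMap.range L := by
        rintro b _ ⟨_, ⟨a, rfl⟩, rfl⟩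
        refine ⟨b * a, ?_⟩
        show ρW (b * a) wj = ρW b (L a)
        rw [map_mul]; rfl
      have htop : LinearMap.range L = ⊤ := by
        rcases hWsimple _ hstable with hbot | htop
        · exfalso
          have : wj ∈ LinearMap.range L := ⟨1, by show ρW 1 wj = wj; rw [map_one]; rfl⟩
          rw [hbot, Submodule.mem_bot] at this
          exact hne this
        · exact htop
      obtain ⟨w0, hw0mem, hw0ne⟩ := (Submodule.ne_bot_iff _).mp hW0
      obtain ⟨a, ha⟩ : ∃ a, L a = w0 := by
        have : w0 ∈ LinearMap.range L := htop ▸ Submodule.mem_top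
        exact this
      obtain ⟨D, c, hc, hac⟩ := exists_decomp Ug hUint a
      have hsum : w0 = ∑ d ∈ D, ρW (c d) wj := by
        rw [← ha]
        show ρW a wj = _
        rw [hac, map_sum]
        simp [LinearMap.sum_apply]
      have hzero : w0 = 0 := by
        calc w0 = proj Wg hWint 0 w0 := (proj_same Wg hWint hw0mem).symm
          _ = ∑ d ∈ D, proj Wg hWint 0 (ρW (c d) wj) := by rw [hsum, map_sum]
          _ = 0 := by
              apply Finset.sum_eq_zero
              intro d _
              by_cases hd : d = -j
              · rw [hd, sub1 (c (-j)) (hc (-j)), map_zero]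
              · have hmem : ρW (c d) wj ∈ Wg (j + d) :=
                  hρWgr d (c d) (hc d) j (Submodule.mem_map_of_mem hwjmem)
                exact proj_ne Wg hWint (by omega) hmem
      exact hw0ne hzero
  -- generators of degree d
  intro i
  set gen : ℤ → Set V := fun d => {x | ∃ f, Deg d f ∧ ∃ v0 ∈ Vg 0, x = ρV f v0} with hgen
  have gen_mem : ∀ d, ∀ x ∈ gen d, x ∈ Vg d := by
    rintro d x ⟨f, hf, v0, hv0, rfl⟩
    have := hρVgr d f hf 0 (Submodule.mem_map_of_mem hv0)
    rwa [zero_add] at this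
  set MV : Submodule k V := Submodule.span k (⋃ d : ℤ, gen d) with hMV
  have hMVstable : ∀ b : Module.End k U, MV.map (ρV b) ≤ MV := by
    intro b
    rw [Submodule.map_span_le]
    rintro x hx
    obtain ⟨_, ⟨d, rfl⟩, ⟨f, hf, v0, hv0, rfl⟩⟩ := hx
    obtain ⟨D, c, hc, hbc⟩ := exists_decomp Ug hUint b
    have : ρV b (ρV f v0) = ∑ e ∈ D, ρV (c e * f) v0 := by
      rw [← Module.End.mul_apply, ← map_mul, hbc, Finset.sum_mul, map_sum]
      simp [LinearMap.sum_apply]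
    rw [this]
    apply Submodule.sum_mem
    intro e _
    apply Submodule.subset_span
    apply Set.mem_iUnion.mpr
    refine ⟨d + e, c e * f, ?_, v0, hv0, rfl⟩
    intro m
    rintro _ ⟨x, hx, rfl⟩
    have h1 : f x ∈ Ug (m + d) := hDeg_apply hf hx
    have h2 : c e (f x) ∈ Ug (m + d + e) := hDeg_apply (hc e) h1
    have : (c e * f) x = c e (f x) := rfl
    rw [this]
    have : m + d + e = m + (d + e) := by omega
    rwa [this] at h2
  have hMVtop : MV = ⊤ := by
    rcases hVsimple MV hMVstable with hbot | htop
    · exfalso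
      obtain ⟨v0, hv0mem, hv0ne⟩ := (Submodule.ne_bot_iff _).mp hV0
      have hv0gen : v0 ∈ MV := by
        apply Submodule.subset_span
        apply Set.mem_iUnion.mpr
        refine ⟨0, 1, ?_, v0, hv0mem, by rw [map_one]; rfl⟩
        intro m
        rintro _ ⟨x, hx, rfl⟩
        show x ∈ Ug (m + 0)
        rwa [add_zero]
      rw [hbot, Submodule.mem_bot] at hv0gen
      exact hv0ne hv0gen
    · exact htop
  -- every element of Vg i lies in the span of degree-i generators
  set Ti : Submodule k V := Submodule.span k (gen i) with hTi
  have hproj_in : ∀ x : V, x ∈ MV → proj Vg hVint i x ∈ Ti := by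
    intro x hx
    induction hx using Submodule.span_induction with
    | mem x hxg =>
        obtain ⟨_, ⟨d, rfl⟩, hxd⟩ := hxg
        by_cases hdi : d = i
        · subst hdi
          rw [proj_same Vg hVint (gen_mem d x hxd)]
          exact Submodule.subset_span hxd
        · rw [proj_ne Vg hVint hdi (gen_mem d x hxd)]
          exact Submodule.zero_mem _
    | zero => rw [map_zero]; exact Submodule.zero_mem _
    | add x y hx hy ihx ihy => rw [map_add]; exact Submodule.add_mem _ ihx ihy
    | smul a x hx ihx => rw [map_smul]; exact Submodule.smul_mem _ _ ihx
  -- conclude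
  rintro _ ⟨v, hv, rfl⟩
  have hvTi : v ∈ Ti := by
    have := hproj_in v (hMVtop ▸ Submodule.mem_top)
    rwa [proj_same Vg hVint hv] at this
  show α v ∈ Wg i
  clear hv
  induction hvTi using Submodule.span_induction with
  | mem x hxg =>
      obtain ⟨f, hf, v0, hv0, rfl⟩ := hxg
      rw [hα f v0]
      have := hρWgr i f hf 0 (Submodule.mem_map_of_mem (lemB v0 hv0))
      rwa [zero_add] at this
  | zero => rw [map_zero]; exact Submodule.zero_mem _
  | add x y hx hy ihx ihy => rw [map_add]; exact Submodule.add_mem _ ihx ihy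
  | smul a x hx ihx => rw [map_smul]; exact Submodule.smul_mem _ _ ihx
end

section
/- Let k be a field and V, W finite-dimensional nonzero k-vector spaces. If φ: End(V) → End(W) is a k-algebra isomorphism, then there exists a k-linear isomorphism u: V → W with φ(a) = u ∘ a ∘ u⁻¹ for all a ∈ End(V), and u is unique up to multiplication by a nonzero scalar: if u' also induces φ then u' = c·u for some c ∈ kˣ. -/
theorem stmt_3_general
    (k : Type) [Field k] (V W : Type)
    [AddCommGroup V] [Module k V] [AddCommGroup W] [Module k W]
    (φ : Module.End k V ≃ₐ[k] Module.End k W) :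
    ∃ u : V ≃ₗ[k] W,
      (∀ a : Module.End k V,
        φ a = (u : V →ₗ[k] W) ∘ₗ a ∘ₗ (u.symm : W →ₗ[k] V)) ∧
      ∀ u' : V ≃ₗ[k] W,
        (∀ a : Module.End k V,
          φ a = (u' : V →ₗ[k] W) ∘ₗ a ∘ₗ (u'.symm : W →ₗ[k] V)) →
        ∃ c : kˣ, (u' : V →ₗ[k] W) = (c : k) • (u : V →ₗ[k] W) := by
  obtain ⟨u, rfl⟩ := φ.eq_linearEquivConjAlgEquiv
  refine ⟨u, fun _ ↦ rfl, fun u' hu' ↦ ?_⟩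
  obtain ⟨c, hc⟩ := (u'.conjAlgEquiv_ext_iff' u).mp (AlgEquiv.ext fun a ↦ (hu' a).symm)
  exact ⟨c, congrArg LinearEquiv.toLinearMap hc⟩

/-- Skolem–Noether for matrix algebras over a field: every
`k`-algebra isomorphism `End(V) ≅ End(W)` is conjugation by a linear
isomorphism `u : V ≃ W`, and `u` is unique up to a nonzero scalar. -/
theorem stmt_3
    (k : Type) [Field k] (V W : Type)
    [AddCommGroup V] [Module k V] [AddCommGroup W] [Module k W]
    [FiniteDimensional k V] [FiniteDimensional k W]
    (hV : Nontrivial V) (hW : Nontrivial W)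
    (φ : Module.End k V ≃ₐ[k] Module.End k W) :
    ∃ u : V ≃ₗ[k] W,
      (∀ a : Module.End k V,
        φ a = (u : V →ₗ[k] W) ∘ₗ a ∘ₗ (u.symm : W →ₗ[k] V)) ∧
      ∀ u' : V ≃ₗ[k] W,
        (∀ a : Module.End k V,
          φ a = (u' : V →ₗ[k] W) ∘ₗ a ∘ₗ (u'.symm : W →ₗ[k] V)) →
        ∃ c : kˣ, (u' : V →ₗ[k] W) = (c : k) • (u : V →ₗ[k] W) :=
  stmt_3_general k V W φ
end
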